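/- arXiv:2512.05892 — 6 statements merged into one kernel-verified Lean document; each statement's English description precedes it below -/
import Mathlib

section
/- Let η be a primitive p-th root of unity and q an integer coprime to p. There is a unique polynomial Φ(x,y) with complex coefficients satisfying: Φ(ηx, η^q y) = Φ(x,y); Φ(x,y) = 1 whenever x + y = 1; Φ(0,0) = 0; and deg Φ = p. Moreover Φ(x,y) = 1 - ∏_{j=1}^{p} (1 - η^j x - η^{qj} y). -/
open MvPolynomial Polynomial Finset

theorem natDegree_aeval_le (Φ : MvPolynomial (Fin 2) ℂ) (f : Fin 2 → Polynomial ℂ)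
    (hf : ∀ i, (f i).natDegree ≤ 1) : (aeval f Φ).natDegree ≤ Φ.totalDegree := by
  rw [MvPolynomial.aeval_def, MvPolynomial.eval₂_eq]
  apply Polynomial.natDegree_sum_le_of_forall_le
  intro d hd
  calc (algebraMap ℂ ℂ[X] (coeff d Φ) * ∏ i ∈ d.support, f i ^ d i).natDegree
      ≤ (algebraMap ℂ ℂ[X] (coeff d Φ)).natDegree + (∏ i ∈ d.support, f i ^ d i).natDegree :=
        natDegree_mul_le
    _ ≤ 0 + ∑ i ∈ d.support, (f i ^ d i).natDegree := by
        gcongr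
        · simp [Polynomial.natDegree_C]
        · exact natDegree_prod_le _ _
    _ ≤ ∑ i ∈ d.support, d i * 1 := by
        rw [zero_add]; gcongr with i
        exact (natDegree_pow_le).trans (by gcongr; exact hf i)
    _ ≤ Φ.totalDegree := by
        simp only [mul_one]
        exact le_totalDegree hd

theorem eval_aeval' (Φ : MvPolynomial (Fin 2) ℂ) (f : Fin 2 → Polynomial ℂ) (s : ℂ) :
    (aeval f Φ).eval s = MvPolynomial.eval (fun i => (f i).eval s) Φ := by
  rw [MvPolynomial.aeval_def]
  rw [show Polynomial.eval s (MvPolynomial.eval₂ (algebraMap ℂ ℂ[X]) f Φ)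
      = Polynomial.evalRingHom s (MvPolynomial.eval₂ (algebraMap ℂ ℂ[X]) f Φ) from rfl]
  rw [MvPolynomial.eval₂_comp_left]
  rw [MvPolynomial.eval, MvPolynomial.eval₂Hom_congr rfl rfl rfl]
  · congr 1
    · ext a; simp


lemma zpow_mul'' (a : ℂ) (ha : a ≠ 0) (m n : ℤ) : a ^ (m * n) = (a ^ m) ^ n := by
  lift a to ℂˣ using ha.isUnit
  rw [← Units.val_zpow_eq_zpow_val, ← Units.val_zpow_eq_zpow_val, ← Units.val_zpow_eq_zpow_val,
    zpow_mul]

lemma prod_shift {M : Type*} [CommMonoid M] (p : ℕ) (hp : 1 ≤ p) (g : ℕ → M)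
    (hg : g (p + 1) = g 1) : ∏ j ∈ Finset.Icc 1 p, g (j + 1) = ∏ j ∈ Finset.Icc 1 p, g j := by
  have h1 : ∏ j ∈ Finset.Icc 1 p, g (j + 1) = ∏ j ∈ Finset.Icc 2 (p + 1), g j := by
    have : Finset.Icc 2 (p+1) = (Finset.Icc 1 p).map (addRightEmbedding 1) := by
      rw [Finset.map_add_right_Icc]
    rw [this, Finset.prod_map]; rfl
  have h2 : Finset.Icc 2 (p + 1) = insert (p + 1) (Finset.Icc 2 p) := by
    ext x; simp only [Finset.mem_Icc, Finset.mem_insert]; omega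
  have h3 : Finset.Icc 1 p = insert 1 (Finset.Icc 2 p) := by
    ext x; simp only [Finset.mem_Icc, Finset.mem_insert]; omega
  rw [h1, h2, h3, Finset.prod_insert (by simp), Finset.prod_insert (by simp), hg]

lemma aeval_eq_eval'' (f : Fin 2 → ℂ) (Φ : MvPolynomial (Fin 2) ℂ) :
    MvPolynomial.aeval f Φ = MvPolynomial.eval f Φ := by
  rw [← MvPolynomial.coe_aeval_eq_eval]; rfl

section Main
variable {p : ℕ} {q : ℤ} {η : ℂ}

noncomputable def gP (q : ℤ) (η : ℂ) (j : ℕ) : MvPolynomial (Fin 2) ℂ :=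
  1 - MvPolynomial.C (η ^ (j : ℤ)) * MvPolynomial.X 0
    - MvPolynomial.C (η ^ (q * (j : ℤ))) * MvPolynomial.X 1

noncomputable def FP (p : ℕ) (q : ℤ) (η : ℂ) : MvPolynomial (Fin 2) ℂ :=
  1 - ∏ j ∈ Finset.Icc 1 p, gP q η j

lemma keyInj (hp : 1 ≤ p) (hη : IsPrimitiveRoot η p) {k j : ℕ}
    (hk : k ∈ Finset.Icc 1 p) (hj : j ∈ Finset.Icc 1 p)
    (h : η ^ (k : ℤ) = η ^ (j : ℤ)) : k = j := by
  have hne : η ≠ 0 := hη.ne_zero (by omega)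
  have h1 : η ^ ((k : ℤ) - j) = 1 := by
    rw [zpow_sub₀ hne, h, div_self (zpow_ne_zero _ hne)]
  have h2 : (p : ℤ) ∣ (k : ℤ) - j := (hη.zpow_eq_one_iff_dvd _).mp h1
  simp only [Finset.mem_Icc] at hk hj
  have := Int.eq_zero_of_abs_lt_dvd h2 (by
    rw [abs_lt]; constructor <;> [skip; skip] <;> omega)
  omega

lemma keyInjQ (hp : 1 ≤ p) (hq : IsCoprime (p : ℤ) q) (hη : IsPrimitiveRoot η p) {k j : ℕ}
    (hk : k ∈ Finset.Icc 1 p) (hj : j ∈ Finset.Icc 1 p)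
    (h : η ^ (q * (k : ℤ)) = η ^ (q * (j : ℤ))) : k = j := by
  have hne : η ≠ 0 := hη.ne_zero (by omega)
  have h1 : η ^ (q * ((k : ℤ) - j)) = 1 := by
    rw [mul_sub, zpow_sub₀ hne, h, div_self (zpow_ne_zero _ hne)]
  have h2 : (p : ℤ) ∣ q * ((k : ℤ) - j) := (hη.zpow_eq_one_iff_dvd _).mp h1
  have h3 : (p : ℤ) ∣ (k : ℤ) - j := (hq.dvd_of_dvd_mul_left h2)
  simp only [Finset.mem_Icc] at hk hj
  have := Int.eq_zero_of_abs_lt_dvd h3 (by rw [abs_lt]; constructor <;> omega)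
  omega


lemma eval_gP (x y : ℂ) (j : ℕ) :
    MvPolynomial.eval ![x, y] (gP q η j) = 1 - η ^ (j : ℤ) * x - η ^ (q * (j : ℤ)) * y := by
  simp [gP]

lemma evalF_line {k : ℕ} (hk : k ∈ Finset.Icc 1 p) {x y : ℂ}
    (hxy : η ^ (k : ℤ) * x + η ^ (q * (k : ℤ)) * y = 1) :
    MvPolynomial.eval ![x, y] (FP p q η) = 1 := by
  unfold FP
  rw [map_sub, map_one, map_prod, Finset.prod_eq_zero hk, sub_zero]
  rw [eval_gP]
  linear_combination -hxy

lemma evalF00 : MvPolynomial.eval ![(0 : ℂ), 0] (FP p q η) = 0 := by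
  simp [FP, gP]

lemma degF_le : (FP p q η).totalDegree ≤ p := by
  unfold FP
  refine (MvPolynomial.totalDegree_sub _ _).trans (max_le (by simp) ?_)
  refine (MvPolynomial.totalDegree_finset_prod _ _).trans ?_
  calc ∑ j ∈ Finset.Icc 1 p, (gP q η j).totalDegree
      ≤ ∑ j ∈ Finset.Icc 1 p, 1 := by
        apply Finset.sum_le_sum
        intro j _
        unfold gP
        refine (MvPolynomial.totalDegree_sub _ _).trans (max_le ?_ ?_)
        · refine (MvPolynomial.totalDegree_sub _ _).trans (max_le (by simp) ?_)
          refine (MvPolynomial.totalDegree_mul _ _).trans ?_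
          rw [MvPolynomial.totalDegree_C, MvPolynomial.totalDegree_X]
        · refine (MvPolynomial.totalDegree_mul _ _).trans ?_
          rw [MvPolynomial.totalDegree_C, MvPolynomial.totalDegree_X]
    _ = p := by simp


lemma constF : MvPolynomial.constantCoeff (FP p q η) = 0 := by
  simp [FP, gP]

lemma zpow_p_one (hp : 1 ≤ p) (hη : IsPrimitiveRoot η p) : η ^ ((p : ℕ) : ℤ) = 1 := by
  rw [zpow_natCast, hη.pow_eq_one]

lemma zpow_qp_one (hp : 1 ≤ p) (hη : IsPrimitiveRoot η p) : η ^ (q * ((p : ℕ) : ℤ)) = 1 := by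
  have hne : η ≠ 0 := hη.ne_zero (by omega)
  rw [mul_comm, zpow_mul'' η hne, zpow_p_one hp hη, one_zpow]

lemma aevalF (hp : 1 ≤ p) (hη : IsPrimitiveRoot η p) :
    MvPolynomial.aeval ![(Polynomial.X : Polynomial ℂ), 1 - Polynomial.X] (FP p q η) = 1 := by
  unfold FP
  rw [map_sub, map_one, map_prod, Finset.prod_eq_zero (Finset.mem_Icc.mpr ⟨hp, le_refl p⟩ : p ∈ Finset.Icc 1 p), sub_zero]
  unfold gP
  rw [map_sub, map_sub, map_one, map_mul, map_mul, MvPolynomial.aeval_X, MvPolynomial.aeval_X,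
    MvPolynomial.aeval_C, MvPolynomial.aeval_C, zpow_p_one hp hη, zpow_qp_one hp hη]
  simp only [Matrix.cons_val_zero, Matrix.cons_val_one, Matrix.head_cons, map_one]
  ring

lemma bindF (hp : 1 ≤ p) (hη : IsPrimitiveRoot η p) :
    MvPolynomial.bind₁ ![MvPolynomial.C η * MvPolynomial.X 0,
      MvPolynomial.C (η ^ q) * MvPolynomial.X 1] (FP p q η) = FP p q η := by
  have hne : η ≠ 0 := hη.ne_zero (by omega)
  unfold FP
  rw [map_sub, map_one, map_prod]
  congr 1
  have hgs : ∀ j : ℕ, MvPolynomial.bind₁ ![MvPolynomial.C η * MvPolynomial.X 0,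
      MvPolynomial.C (η ^ q) * MvPolynomial.X 1] (gP q η j) = gP q η (j + 1) := by
    intro j
    have e1 : η ^ (j : ℤ) * η = η ^ (((j + 1 : ℕ) : ℕ) : ℤ) := by
      push_cast
      rw [zpow_add₀ hne, zpow_one]
    have e2 : η ^ (q * (j : ℤ)) * η ^ q = η ^ (q * (((j + 1 : ℕ) : ℕ) : ℤ)) := by
      push_cast
      rw [mul_add, mul_one, zpow_add₀ hne]
    unfold gP
    rw [map_sub, map_sub, map_one, map_mul, map_mul, MvPolynomial.bind₁_X_right,
      MvPolynomial.bind₁_X_right, MvPolynomial.bind₁_C_right, MvPolynomial.bind₁_C_right]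
    simp only [Matrix.cons_val_zero, Matrix.cons_val_one, Matrix.head_cons]
    rw [← e1, ← e2, MvPolynomial.C_mul, MvPolynomial.C_mul]
    ring
  rw [Finset.prod_congr rfl fun j _ => hgs j]
  apply prod_shift p hp
  unfold gP
  congr 2
  · push_cast
    rw [zpow_add₀ hne, zpow_p_one hp hη, one_mul]
  · push_cast
    rw [mul_add, zpow_add₀ hne, mul_comm q (p:ℤ), zpow_mul'' η hne, zpow_p_one hp hη, one_zpow,
      one_mul, mul_one]

lemma degF_eq (hp : 1 ≤ p) (hη : IsPrimitiveRoot η p) : (FP p q η).totalDegree = p := by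
  have hne : η ≠ 0 := hη.ne_zero (by omega)
  refine le_antisymm degF_le ?_
  have key : (MvPolynomial.aeval ![(Polynomial.X : Polynomial ℂ), 0] (FP p q η)) =
      1 - ∏ j ∈ Finset.Icc 1 p, (1 - Polynomial.C (η ^ (j : ℤ)) * Polynomial.X) := by
    unfold FP
    rw [map_sub, map_one, map_prod]
    congr 1
    refine Finset.prod_congr rfl fun j _ => ?_
    unfold gP
    rw [map_sub, map_sub, map_one, map_mul, map_mul, MvPolynomial.aeval_X, MvPolynomial.aeval_X,
      MvPolynomial.aeval_C, MvPolynomial.aeval_C]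
    simp only [Matrix.cons_val_zero, Matrix.cons_val_one, Matrix.head_cons, mul_zero, sub_zero]
    rfl
  have hQ : (∏ j ∈ Finset.Icc 1 p, (1 - Polynomial.C (η ^ (j : ℤ)) * Polynomial.X)).natDegree
      = p := by
    rw [Polynomial.natDegree_prod]
    · have hd1 : ∀ j ∈ Finset.Icc 1 p,
          (1 - Polynomial.C (η ^ (j : ℤ)) * Polynomial.X).natDegree = 1 := by
        intro j _
        rw [show (1 : Polynomial ℂ) - Polynomial.C (η ^ (j : ℤ)) * Polynomial.X
            = Polynomial.C (-(η ^ (j : ℤ))) * Polynomial.X + Polynomial.C 1 by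
          rw [map_neg, map_one]; ring]
        exact Polynomial.natDegree_linear (neg_ne_zero.mpr (zpow_ne_zero _ hne))
      rw [Finset.sum_congr rfl hd1, Finset.sum_const, Nat.card_Icc, smul_eq_mul, mul_one]
      omega
    · intro j _
      intro hzero
      have := congrArg (Polynomial.eval 0) hzero
      simp at this
  have hdeg : (MvPolynomial.aeval ![(Polynomial.X : Polynomial ℂ), 0] (FP p q η)).natDegree
      = p := by
    rw [key]
    rw [Polynomial.natDegree_sub_eq_right_of_natDegree_lt, hQ]
    rw [hQ, Polynomial.natDegree_one]
    omega
  calc (p : ℕ) = _ := hdeg.symm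
    _ ≤ (FP p q η).totalDegree := by
        apply natDegree_aeval_le
        intro i
        fin_cases i <;> simp


lemma line_eval_Phi (hp : 1 ≤ p) (hη : IsPrimitiveRoot η p) (Φ : MvPolynomial (Fin 2) ℂ)
    (h1 : MvPolynomial.bind₁ ![MvPolynomial.C η * MvPolynomial.X 0,
        MvPolynomial.C (η ^ q) * MvPolynomial.X 1] Φ = Φ)
    (h2 : MvPolynomial.aeval ![(Polynomial.X : Polynomial ℂ), 1 - Polynomial.X] Φ = 1)
    {k : ℕ} (hk : k ∈ Finset.Icc 1 p) {x y : ℂ}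
    (hxy : η ^ (k : ℤ) * x + η ^ (q * (k : ℤ)) * y = 1) :
    MvPolynomial.eval ![x, y] Φ = 1 := by
  have hne : η ≠ 0 := hη.ne_zero (by omega)
  have stepA : ∀ x y : ℂ, MvPolynomial.eval ![x, y] Φ = MvPolynomial.eval ![η * x, η ^ q * y] Φ := by
    intro x y
    conv_lhs => rw [← h1]
    have := MvPolynomial.aeval_bind₁ (R := ℂ) (S := ℂ) ![x, y]
      ![MvPolynomial.C η * MvPolynomial.X 0, MvPolynomial.C (η ^ q) * MvPolynomial.X 1] Φ
    rw [aeval_eq_eval'', aeval_eq_eval''] at this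
    rw [this]
    have hfun : (fun i => (MvPolynomial.aeval ![x, y])
        (![MvPolynomial.C η * MvPolynomial.X 0, MvPolynomial.C (η ^ q) * MvPolynomial.X 1] i))
        = ![η * x, η ^ q * y] := by
      funext i; fin_cases i <;> simp
    rw [hfun]
  have stepB : ∀ m : ℕ, ∀ x y : ℂ,
      MvPolynomial.eval ![x, y] Φ = MvPolynomial.eval ![η ^ m * x, (η ^ q) ^ m * y] Φ := by
    intro m
    induction m with
    | zero => intro x y; simp
    | succ m ih =>
      intro x y
      rw [stepA x y, ih (η * x) (η ^ q * y)]
      congr 2 <;> ring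
  have e1 : MvPolynomial.eval ![x, y] Φ
      = MvPolynomial.eval ![η ^ (k : ℤ) * x, η ^ (q * (k : ℤ)) * y] Φ := by
    rw [stepB k x y, show (η : ℂ) ^ k = η ^ (k : ℤ) from (zpow_natCast η k).symm,
      show ((η : ℂ) ^ q) ^ k = η ^ (q * (k : ℤ)) from by
        rw [zpow_mul'' η hne, zpow_natCast]]
  rw [e1]
  have e2 : η ^ (q * (k : ℤ)) * y = 1 - η ^ (k : ℤ) * x := by linear_combination hxy
  rw [e2]
  have := congrArg (Polynomial.eval (η ^ (k : ℤ) * x)) h2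
  rw [eval_aeval'] at this
  rw [show (fun i => Polynomial.eval (η ^ (k : ℤ) * x)
        (![(Polynomial.X : Polynomial ℂ), 1 - Polynomial.X] i))
      = ![η ^ (k : ℤ) * x, 1 - η ^ (k : ℤ) * x] from by funext i; fin_cases i <;> simp] at this
  simpa using this

end Main

theorem stmt_0 (p : ℕ) (hp : 1 ≤ p) (q : ℤ) (hq : IsCoprime (p : ℤ) q)
    (η : ℂ) (hη : IsPrimitiveRoot η p) :
    ∀ Φ : MvPolynomial (Fin 2) ℂ,
      (MvPolynomial.bind₁ ![MvPolynomial.C η * MvPolynomial.X 0,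
          MvPolynomial.C (η ^ q) * MvPolynomial.X 1] Φ = Φ ∧
        MvPolynomial.aeval ![(Polynomial.X : Polynomial ℂ), 1 - Polynomial.X] Φ = 1 ∧
        MvPolynomial.constantCoeff Φ = 0 ∧
        Φ.totalDegree = p) ↔
      Φ = 1 - ∏ j ∈ Finset.Icc 1 p,
        (1 - MvPolynomial.C (η ^ (j : ℤ)) * MvPolynomial.X 0
           - MvPolynomial.C (η ^ (q * (j : ℤ))) * MvPolynomial.X 1) := by
  intro Φ
  have hF : (1 - ∏ j ∈ Finset.Icc 1 p,
      (1 - MvPolynomial.C (η ^ (j : ℤ)) * MvPolynomial.X 0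
         - MvPolynomial.C (η ^ (q * (j : ℤ))) * MvPolynomial.X 1)) = FP p q η := rfl
  rw [hF]
  have hne : η ≠ 0 := hη.ne_zero (by omega)
  constructor
  · rintro ⟨h1, h2, h3, h4⟩
    have hdegΨ : (Φ - FP p q η).totalDegree ≤ p :=
      (MvPolynomial.totalDegree_sub _ _).trans (max_le (le_of_eq h4) degF_le)
    have hΦ00 : MvPolynomial.eval ![(0 : ℂ), 0] Φ = 0 := by
      rw [show ![(0 : ℂ), 0] = (fun _ => 0 : Fin 2 → ℂ) from by funext i; fin_cases i <;> rfl,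
        MvPolynomial.eval_zero', h3]
    have key : ∀ a b : ℂ, MvPolynomial.eval ![a, b] (Φ - FP p q η) = 0 := by
      intro a b
      classical
      set Bad : Finset ℂ :=
        ((Finset.Icc 1 p).image fun k : ℕ => -(η ^ (k : ℤ) * a) / η ^ (q * (k : ℤ))) ∪
        (((Finset.Icc 1 p) ×ˢ (Finset.Icc 1 p)).image fun kj : ℕ × ℕ =>
          ((η ^ ((kj.2 : ℕ) : ℤ) - η ^ ((kj.1 : ℕ) : ℤ)) * a) /
            (η ^ (q * ((kj.1 : ℕ) : ℤ)) - η ^ (q * ((kj.2 : ℕ) : ℤ)))) with hBad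
      have claim : ∀ b' : ℂ, b' ∉ Bad → MvPolynomial.eval ![a, b'] (Φ - FP p q η) = 0 := by
        intro b' hb'
        set D : ℕ → ℂ := fun k => η ^ (k : ℤ) * a + η ^ (q * (k : ℤ)) * b' with hD
        have hDne : ∀ k ∈ Finset.Icc 1 p, D k ≠ 0 := by
          intro k hk h0
          apply hb'
          rw [hBad]
          apply Finset.mem_union_left
          refine Finset.mem_image.mpr ⟨k, hk, ?_⟩
          rw [div_eq_iff (zpow_ne_zero _ hne)]
          simp only [hD] at h0
          linear_combination -h0
        have hinj : ∀ k ∈ Finset.Icc 1 p, ∀ j ∈ Finset.Icc 1 p, (D k)⁻¹ = (D j)⁻¹ → k = j := by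
          intro k hk j hj hkj
          by_contra hnekj
          have hDkj : D k = D j := by
            rw [← inv_inv (D k), hkj, inv_inv]
          apply hb'
          rw [hBad]
          apply Finset.mem_union_right
          refine Finset.mem_image.mpr ⟨(k, j), Finset.mem_product.mpr ⟨hk, hj⟩, ?_⟩
          have hden : η ^ (q * (k : ℤ)) - η ^ (q * (j : ℤ)) ≠ 0 := by
            intro h
            exact hnekj (keyInjQ hp hq hη hk hj (by linear_combination h))
          rw [div_eq_iff hden]
          simp only [hD] at hDkj
          linear_combination -hDkj
        set S : Finset ℂ := insert 0 ((Finset.Icc 1 p).image fun k => (D k)⁻¹) with hS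
        have hcard : p + 1 ≤ S.card := by
          rw [hS, Finset.card_insert_of_notMem, Finset.card_image_of_injOn]
          · rw [Nat.card_Icc]; omega
          · intro k hk j hj h; exact hinj k hk j hj h
          · intro h0
            obtain ⟨k, hk, hk0⟩ := Finset.mem_image.mp h0
            exact hDne k hk (inv_eq_zero.mp hk0)
        set P : Polynomial ℂ := MvPolynomial.aeval
          ![Polynomial.C a * Polynomial.X, Polynomial.C b' * Polynomial.X] (Φ - FP p q η) with hP
        have hPdeg : P.natDegree ≤ p := by
          refine (natDegree_aeval_le _ _ fun i => ?_).trans hdegΨ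
          fin_cases i <;>
            exact Polynomial.natDegree_mul_le.trans
              (by simp [Polynomial.natDegree_C, Polynomial.natDegree_X])
        have hPeval : ∀ t ∈ S, P.eval t = 0 := by
          intro t ht
          rw [hP, eval_aeval']
          rw [show (fun i => Polynomial.eval t
              (![Polynomial.C a * Polynomial.X, Polynomial.C b' * Polynomial.X] i))
            = ![a * t, b' * t] from by funext i; fin_cases i <;> simp]
          rw [hS] at ht
          rcases Finset.mem_insert.mp ht with rfl | ht
          · rw [show ![a * 0, b' * 0] = ![(0 : ℂ), 0] from by norm_num]
            rw [map_sub, hΦ00, evalF00, sub_zero]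
          · obtain ⟨k, hk, rfl⟩ := Finset.mem_image.mp ht
            have hlineq : η ^ (k : ℤ) * (a * (D k)⁻¹) + η ^ (q * (k : ℤ)) * (b' * (D k)⁻¹)
                = 1 := by
              have hd := hDne k hk
              field_simp
              simp only [hD]
            rw [map_sub, line_eval_Phi hp hη Φ h1 h2 hk hlineq, evalF_line hk hlineq, sub_self]
        have hP0 : P = 0 :=
          Polynomial.eq_zero_of_natDegree_lt_card_of_eval_eq_zero' P S hPeval (by omega)
        have := congrArg (Polynomial.eval 1) hP0
        rw [hP, eval_aeval'] at this
        rw [show (fun i => Polynomial.eval 1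
            (![Polynomial.C a * Polynomial.X, Polynomial.C b' * Polynomial.X] i))
          = ![a, b'] from by funext i; fin_cases i <;> simp] at this
        simpa using this
      set R : Polynomial ℂ := MvPolynomial.aeval ![Polynomial.C a, Polynomial.X]
        (Φ - FP p q η) with hR
      have hR0 : R = 0 := by
        apply Polynomial.eq_zero_of_infinite_isRoot
        apply Set.Infinite.mono (s := ((Bad : Set ℂ))ᶜ)
        · intro b' hb'
          rw [Set.mem_setOf_eq, Polynomial.IsRoot, hR, eval_aeval']
          rw [show (fun i => Polynomial.eval b' (![Polynomial.C a, Polynomial.X] i))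
            = ![a, b'] from by funext i; fin_cases i <;> simp]
          exact claim b' (by simpa using hb')
        · exact (Bad.finite_toSet).infinite_compl
      have := congrArg (Polynomial.eval b) hR0
      rw [hR, eval_aeval'] at this
      rw [show (fun i => Polynomial.eval b (![Polynomial.C a, Polynomial.X] i))
        = ![a, b] from by funext i; fin_cases i <;> simp] at this
      simpa using this
    have hsub : Φ - FP p q η = 0 := by
      apply MvPolynomial.funext
      intro v
      rw [show v = ![v 0, v 1] from by funext i; fin_cases i <;> rfl, map_zero]
      exact key (v 0) (v 1)
    linear_combination hsub
  · rintro rfl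
    exact ⟨bindF hp hη, aevalF hp hη, constF, degF_eq hp hη⟩
end

section
/- For each integer r ≥ 0, the polynomial f_{2r+1}(x,y) = x^{2r+1} + y^{2r+1} + Σ_{j=1}^{r} c(r,j) x^{2r+1-2j} y^j, where c(r,j) = ((2r+1)/j) · binomial(2r−j, j−1), satisfies f_{2r+1}(x, 1−x) = 1 identically. -/
open Polynomial

/-- integer form of the coefficient `c(r,j)` -/
def dd (r j : ℕ) : ℕ := Nat.choose (2*r+1-j) j + Nat.choose (2*r-j) (j-1)

/-- coefficients of the collapsed partial sums -/
def bb (m k i : ℕ) : ℕ := Nat.choose (m + min i (2*k - i)) m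

/-- backward difference of a sequence -/
def dif {R : Type*} [Ring R] (g : ℕ → R) : ℕ → R
  | 0 => g 0
  | (j+1) => g (j+1) - g j

lemma dif_zero {R : Type*} [Ring R] (g : ℕ → R) : dif g 0 = g 0 := rfl

lemma dif_succ {R : Type*} [Ring R] (g : ℕ → R) (j : ℕ) :
    dif g (j+1) = g (j+1) - g j := rfl

lemma spR {R : Type*} [CommRing R] (a b a' b' : ℕ) (ha : a' = a+1) (hb : b' = b+1) :
    ((a'.choose b' : ℕ) : R) = a.choose b + a.choose b' := by
  subst ha; subst hb
  have h := Nat.choose_succ_succ a b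
  rw [← Nat.cast_add]
  exact congrArg (fun m : ℕ => (m : R)) h

lemma symR {R : Type*} [CommRing R] (n a b : ℕ) (h : a + b = n) :
    ((n.choose a : ℕ) : R) = n.choose b := by
  have hb : b = n - a := by omega
  subst hb
  exact congrArg (fun m : ℕ => (m : R)) (Nat.choose_symm (by omega : a ≤ n)).symm

lemma aux {R : Type*} [CommRing R] (y : R) (g : ℕ → R) :
    ∀ t, (1 - y) * ∑ i ∈ Finset.range (t+1), g i * y^i
      = (∑ i ∈ Finset.range (t+1), dif g i * y^i) - g t * y^(t+1)
  | 0 => by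
      simp only [Finset.sum_range_succ, Finset.sum_range_zero, dif_zero]
      ring
  | (t+1) => by
      rw [Finset.sum_range_succ (f := fun i => g i * y^i),
        Finset.sum_range_succ (f := fun i => dif g i * y^i), dif_succ]
      linear_combination aux y g t

lemma point {R : Type*} [CommRing R] (p k i : ℕ) (hi : i < 2*k+2+1) :
    ((bb (2*p) (k+1) i : ℕ) : R)
      = dif (dif (fun t => if t ≤ 2*k then ((bb (2*(p+1)) k t : ℕ) : R) else 0)) i
        + (if i = k+1 then ((Nat.choose (2*p+k+2) (k+1) + Nat.choose (2*p+k+1) k : ℕ) : R) else 0) := by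
  set g : ℕ → R := fun t => if t ≤ 2*k then ((bb (2*(p+1)) k t : ℕ) : R) else 0 with hg
  match i, hi with
  | 0, _ =>
    have h0 : dif (dif g) 0 = g 0 := rfl
    rw [h0, if_neg (by omega : (0:ℕ) ≠ k+1)]
    have : g 0 = ((bb (2*(p+1)) k 0 : ℕ) : R) := if_pos (by omega)
    rw [this]
    simp [bb, Nat.choose_self]
  | 1, _ =>
    have h1 : dif (dif g) 1 = (g 1 - g 0) - g 0 := by
      rw [show (1:ℕ) = 0+1 from rfl, dif_succ, dif_succ, dif_zero]
    rw [h1]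
    have hg0 : g 0 = ((bb (2*(p+1)) k 0 : ℕ) : R) := if_pos (by omega)
    have hb0 : bb (2*(p+1)) k 0 = 1 := by simp [bb, Nat.choose_self]
    rcases Nat.eq_zero_or_pos k with hk | hk
    · subst hk
      rw [if_pos (by omega : (1:ℕ) = 0+1)]
      have hg1 : g 1 = 0 := if_neg (by omega)
      rw [hg1, hg0, hb0]
      have hLHS : bb (2*p) 1 1 = Nat.choose (2*p+1) (2*p) := by
        simp [bb]
      rw [hLHS]
      have e1 : ((Nat.choose (2*p+1) (2*p) : ℕ) : R) = (2*p+1 : ℕ) := by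
        exact_mod_cast congrArg _ (Nat.choose_succ_self_right (2*p))
      rw [e1]
      have e2 : Nat.choose (2*p+0+2) (0+1) = 2*p+2 := by
        rw [show 2*p+0+2 = 2*p+2 by omega]
        exact Nat.choose_one_right _
      have e3 : Nat.choose (2*p+0+1) 0 = 1 := Nat.choose_zero_right _
      rw [e2, e3]
      push_cast
      ring
    · rw [if_neg (by omega : (1:ℕ) ≠ k+1)]
      have hg1 : g 1 = ((bb (2*(p+1)) k 1 : ℕ) : R) := if_pos (by omega)
      have hb1 : bb (2*(p+1)) k 1 = Nat.choose (2*p+2+1) (2*p+2) := by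
        unfold bb
        rw [show min 1 (2*k-1) = 1 by omega, show 2*(p+1) = 2*p+2 from rfl]
      have hL : bb (2*p) (k+1) 1 = Nat.choose (2*p+1) (2*p) := by
        unfold bb
        rw [show min 1 (2*(k+1)-1) = 1 by omega]
      rw [hg1, hg0, hb0, hb1, hL]
      have e1 : ((Nat.choose (2*p+1) (2*p) : ℕ) : R) = (2*p+1 : ℕ) := by
        exact_mod_cast congrArg _ (Nat.choose_succ_self_right (2*p))
      have e2 : ((Nat.choose (2*p+2+1) (2*p+2) : ℕ) : R) = (2*p+3 : ℕ) := by
        have := Nat.choose_succ_self_right (2*p+2)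
        rw [show 2*p+2+1 = 2*p+3 by omega] at this ⊢
        exact_mod_cast congrArg _ this
      rw [e1, e2]
      push_cast
      ring
  | (j+2), hi =>
    have hj : j + 2 ≤ 2*k+2 := by omega
    have h2 : dif (dif g) (j+2) = (g (j+2) - g (j+1)) - (g (j+1) - g j) := by
      rw [show j+2 = (j+1)+1 from rfl, dif_succ, dif_succ, dif_succ]
    rw [h2]
    by_cases hA : j+2 ≤ k
    · -- left region
      rw [if_neg (by omega : j+2 ≠ k+1)]
      have hgj2 : g (j+2) = ((Nat.choose (2*p+2+(j+2)) (2*p+2) : ℕ) : R) := by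
        rw [hg]; dsimp only
        rw [if_pos (by omega : j+2 ≤ 2*k)]
        unfold bb
        rw [show min (j+2) (2*k-(j+2)) = j+2 by omega,
          show 2*(p+1) = 2*p+2 by omega]
      have hgj1 : g (j+1) = ((Nat.choose (2*p+2+(j+1)) (2*p+2) : ℕ) : R) := by
        rw [hg]; dsimp only
        rw [if_pos (by omega : j+1 ≤ 2*k)]
        unfold bb
        rw [show min (j+1) (2*k-(j+1)) = j+1 by omega,
          show 2*(p+1) = 2*p+2 by omega]
      have hgj : g j = ((Nat.choose (2*p+2+j) (2*p+2) : ℕ) : R) := by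
        rw [hg]; dsimp only
        rw [if_pos (by omega : j ≤ 2*k)]
        unfold bb
        rw [show min j (2*k-j) = j by omega, show 2*(p+1) = 2*p+2 by omega]
      have hL : bb (2*p) (k+1) (j+2) = Nat.choose (2*p+2+j) (2*p) := by
        unfold bb
        rw [show min (j+2) (2*(k+1)-(j+2)) = j+2 by omega,
          show 2*p+(j+2) = 2*p+2+j by omega]
      rw [hgj2, hgj1, hgj, hL]
      have P1 : ((Nat.choose (2*p+2+(j+2)) (2*p+2) : ℕ) : R)
          = Nat.choose (2*p+2+(j+1)) (2*p+1) + Nat.choose (2*p+2+(j+1)) (2*p+2) :=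
        spR _ _ _ _ (by omega) (by omega)
      have P2 : ((Nat.choose (2*p+2+(j+1)) (2*p+1) : ℕ) : R)
          = Nat.choose (2*p+2+j) (2*p) + Nat.choose (2*p+2+j) (2*p+1) :=
        spR _ _ _ _ (by omega) (by omega)
      have P3 : ((Nat.choose (2*p+2+(j+1)) (2*p+2) : ℕ) : R)
          = Nat.choose (2*p+2+j) (2*p+1) + Nat.choose (2*p+2+j) (2*p+2) :=
        spR _ _ _ _ (by omega) (by omega)
      linear_combination P3 - P1 - P2
    · by_cases hB : j+2 = k+1
      · -- middle
        have hk : k = j+1 := by omega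
        subst hk
        rw [if_pos rfl, show 2*p+(j+1)+2 = 2*p+2+(j+1) from by omega,
          show 2*p+(j+1)+1 = 2*p+2+j from by omega]
        have hgj2 : g (j+2) = ((Nat.choose (2*p+2+j) (2*p+2) : ℕ) : R) := by
          rw [hg]; dsimp only
          rw [if_pos (by omega : j+2 ≤ 2*(j+1))]
          unfold bb
          rw [show min (j+2) (2*(j+1)-(j+2)) = j by omega,
            show 2*(p+1) = 2*p+2 by omega]
        have hgj1 : g (j+1) = ((Nat.choose (2*p+2+(j+1)) (2*p+2) : ℕ) : R) := by
          rw [hg]; dsimp only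
          rw [if_pos (by omega : j+1 ≤ 2*(j+1))]
          unfold bb
          rw [show min (j+1) (2*(j+1)-(j+1)) = j+1 by omega,
            show 2*(p+1) = 2*p+2 by omega]
        have hgj : g j = ((Nat.choose (2*p+2+j) (2*p+2) : ℕ) : R) := by
          rw [hg]; dsimp only
          rw [if_pos (by omega : j ≤ 2*(j+1))]
          unfold bb
          rw [show min j (2*(j+1)-j) = j by omega, show 2*(p+1) = 2*p+2 by omega]
        have hL : bb (2*p) (j+1+1) (j+2) = Nat.choose (2*p+2+j) (2*p) := by
          unfold bb
          rw [show min (j+2) (2*(j+1+1)-(j+2)) = j+2 by omega,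
            show 2*p+(j+2) = 2*p+2+j by omega]
        rw [hgj2, hgj1, hgj, hL]
        have S1 : ((Nat.choose (2*p+2+(j+1)) (j+1+1) : ℕ) : R)
            = Nat.choose (2*p+2+(j+1)) (2*p+1) := symR _ _ _ (by omega)
        have S2 : ((Nat.choose (2*p+2+j) (j+1) : ℕ) : R)
            = Nat.choose (2*p+2+j) (2*p+1) := symR _ _ _ (by omega)
        have P1 : ((Nat.choose (2*p+2+(j+1)) (2*p+2) : ℕ) : R)
            = Nat.choose (2*p+2+j) (2*p+1) + Nat.choose (2*p+2+j) (2*p+2) :=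
          spR _ _ _ _ (by omega) (by omega)
        have P2 : ((Nat.choose (2*p+2+(j+1)) (2*p+1) : ℕ) : R)
            = Nat.choose (2*p+2+j) (2*p) + Nat.choose (2*p+2+j) (2*p+1) :=
          spR _ _ _ _ (by omega) (by omega)
        push_cast at S1 S2 P1 P2 ⊢
        linear_combination 2*P1 - P2 - S1 - S2
      · by_cases hC : j+2 = 2*k+1
        · -- next-to-top
          obtain ⟨k', rfl⟩ : ∃ k', k = k'+1 := ⟨k-1, by omega⟩
          have hj' : j = 2*k'+1 := by omega
          subst hj'
          rw [if_neg (by omega)]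
          have hgj2 : g (2*k'+1+2) = 0 := if_neg (by omega)
          have hgj1 : g (2*k'+1+1) = ((Nat.choose (2*p+2+0) (2*p+2) : ℕ) : R) := by
            rw [hg]; dsimp only
            rw [if_pos (by omega : 2*k'+1+1 ≤ 2*(k'+1))]
            unfold bb
            rw [show min (2*k'+1+1) (2*(k'+1)-(2*k'+1+1)) = 0 by omega,
              show 2*(p+1) = 2*p+2 by omega]
          have hgj : g (2*k'+1) = ((Nat.choose (2*p+2+1) (2*p+2) : ℕ) : R) := by
            rw [hg]; dsimp only
            rw [if_pos (by omega : 2*k'+1 ≤ 2*(k'+1))]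
            unfold bb
            rw [show min (2*k'+1) (2*(k'+1)-(2*k'+1)) = 1 by omega,
              show 2*(p+1) = 2*p+2 by omega]
          have hL : bb (2*p) (k'+1+1) (2*k'+1+2) = Nat.choose (2*p+1) (2*p) := by
            unfold bb
            rw [show min (2*k'+1+2) (2*(k'+1+1)-(2*k'+1+2)) = 1 by omega]
          rw [hgj2, hgj1, hgj, hL]
          have e0 : Nat.choose (2*p+2+0) (2*p+2) = 1 := by
            rw [show 2*p+2+0 = 2*p+2 by omega]; exact Nat.choose_self _
          have e1 : ((Nat.choose (2*p+2+1) (2*p+2) : ℕ) : R) = (2*p+3 : ℕ) := by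
            have := Nat.choose_succ_self_right (2*p+2)
            rw [show 2*p+3 = 2*p+2+1 by omega]
            exact_mod_cast congrArg _ this
          have e2 : ((Nat.choose (2*p+1) (2*p) : ℕ) : R) = (2*p+1 : ℕ) := by
            exact_mod_cast congrArg _ (Nat.choose_succ_self_right (2*p))
          rw [e0, e1, e2]
          push_cast
          ring
        · by_cases hD : j+2 = 2*k+2
          · -- top
            have hj' : j = 2*k := by omega
            subst hj'
            rw [if_neg (by omega)]
            have hgj2 : g (2*k+2) = 0 := if_neg (by omega)
            have hgj1 : g (2*k+1) = 0 := if_neg (by omega)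
            have hgj : g (2*k) = ((Nat.choose (2*p+2+0) (2*p+2) : ℕ) : R) := by
              rw [hg]; dsimp only
              rw [if_pos (by omega : 2*k ≤ 2*k)]
              unfold bb
              rw [show min (2*k) (2*k-2*k) = 0 by omega,
                show 2*(p+1) = 2*p+2 by omega]
            have hL : bb (2*p) (k+1) (2*k+2) = Nat.choose (2*p+0) (2*p) := by
              unfold bb
              rw [show min (2*k+2) (2*(k+1)-(2*k+2)) = 0 by omega]
            rw [hgj2, hgj1, hgj, hL]
            have e0 : Nat.choose (2*p+2+0) (2*p+2) = 1 := by
              rw [show 2*p+2+0 = 2*p+2 by omega]; exact Nat.choose_self _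
            have e1 : Nat.choose (2*p+0) (2*p) = 1 := by
              rw [show 2*p+0 = 2*p by omega]; exact Nat.choose_self _
            rw [e0, e1]
            push_cast
            ring
          · -- right region
            have hE : k+2 ≤ j+2 ∧ j+2 ≤ 2*k := by omega
            obtain ⟨s, hs⟩ : ∃ s, 2*k = (j+2) + s := ⟨2*k-(j+2), by omega⟩
            rw [if_neg (by omega)]
            have hgj2 : g (j+2) = ((Nat.choose (2*p+2+s) (2*p+2) : ℕ) : R) := by
              rw [hg]; dsimp only
              rw [if_pos (by omega : j+2 ≤ 2*k)]
              unfold bb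
              rw [show min (j+2) (2*k-(j+2)) = s by omega,
                show 2*(p+1) = 2*p+2 by omega]
            have hgj1 : g (j+1) = ((Nat.choose (2*p+2+(s+1)) (2*p+2) : ℕ) : R) := by
              rw [hg]; dsimp only
              rw [if_pos (by omega : j+1 ≤ 2*k)]
              unfold bb
              rw [show min (j+1) (2*k-(j+1)) = s+1 by omega,
                show 2*(p+1) = 2*p+2 by omega]
            have hgj : g j = ((Nat.choose (2*p+2+(s+2)) (2*p+2) : ℕ) : R) := by
              rw [hg]; dsimp only
              rw [if_pos (by omega : j ≤ 2*k)]
              unfold bb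
              rw [show min j (2*k-j) = s+2 by omega,
                show 2*(p+1) = 2*p+2 by omega]
            have hL : bb (2*p) (k+1) (j+2) = Nat.choose (2*p+2+s) (2*p) := by
              unfold bb
              rw [show min (j+2) (2*(k+1)-(j+2)) = s+2 by omega,
                show 2*p+(s+2) = 2*p+2+s by omega]
            rw [hgj2, hgj1, hgj, hL]
            have P1 : ((Nat.choose (2*p+2+(s+2)) (2*p+2) : ℕ) : R)
                = Nat.choose (2*p+2+(s+1)) (2*p+1) + Nat.choose (2*p+2+(s+1)) (2*p+2) :=
              spR _ _ _ _ (by omega) (by omega)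
            have P2 : ((Nat.choose (2*p+2+(s+1)) (2*p+1) : ℕ) : R)
                = Nat.choose (2*p+2+s) (2*p) + Nat.choose (2*p+2+s) (2*p+1) :=
              spR _ _ _ _ (by omega) (by omega)
            have P3 : ((Nat.choose (2*p+2+(s+1)) (2*p+2) : ℕ) : R)
                = Nat.choose (2*p+2+s) (2*p+1) + Nat.choose (2*p+2+s) (2*p+2) :=
              spR _ _ _ _ (by omega) (by omega)
            linear_combination P3 - P1 - P2

lemma key {R : Type*} [CommRing R] (x y : R) (h : x + y = 1) (p k : ℕ) :
    x^2 * (∑ i ∈ Finset.range (2*k+1), ((bb (2*(p+1)) k i : ℕ) : R) * y^i)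
      + ((Nat.choose (2*p+k+2) (k+1) + Nat.choose (2*p+k+1) k : ℕ) : R) * y^(k+1)
    = ∑ i ∈ Finset.range (2*(k+1)+1), ((bb (2*p) (k+1) i : ℕ) : R) * y^i := by
  have hx : x = 1 - y := by linear_combination h
  set g : ℕ → R := fun t => if t ≤ 2*k then ((bb (2*(p+1)) k t : ℕ) : R) else 0 with hg
  have hg1 : g (2*k+1) = 0 := if_neg (by omega)
  have hg2 : g (2*k+2) = 0 := if_neg (by omega)
  have e0 : ∑ i ∈ Finset.range (2*k+1), ((bb (2*(p+1)) k i : ℕ) : R) * y^i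
      = ∑ i ∈ Finset.range (2*k+2+1), g i * y^i := by
    rw [Finset.sum_range_succ (f := fun i => g i * y^i),
      show 2*k+2 = (2*k+1)+1 from rfl,
      Finset.sum_range_succ (f := fun i => g i * y^i), hg1, hg2]
    simp only [zero_mul, add_zero]
    exact Finset.sum_congr rfl fun i hi => by
      have hi' : i ≤ 2*k := by
        have := Finset.mem_range.mp hi; omega
      rw [hg]; dsimp only
      rw [if_pos hi']
  have A1 := aux y g (2*k+2)
  rw [hg2, zero_mul, sub_zero] at A1
  have A2 := aux y (dif g) (2*k+2)
  have hd2 : dif g (2*k+2) = 0 := by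
    have hdd := dif_succ g (2*k+1)
    rw [show (2*k+1)+1 = 2*k+2 from rfl] at hdd
    rw [hdd, hg1, hg2, sub_zero]
  rw [hd2, zero_mul, sub_zero] at A2
  have main : x^2 * (∑ i ∈ Finset.range (2*k+1), ((bb (2*(p+1)) k i : ℕ) : R) * y^i)
      = ∑ i ∈ Finset.range (2*k+2+1), dif (dif g) i * y^i := by
    rw [e0, hx, show (1-y)^2 * (∑ i ∈ Finset.range (2*k+2+1), g i * y^i)
      = (1-y) * ((1-y) * ∑ i ∈ Finset.range (2*k+2+1), g i * y^i) from by ring, A1, A2]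
  rw [main]
  have e2 : (∑ i ∈ Finset.range (2*k+2+1),
          (if i = k+1 then ((Nat.choose (2*p+k+2) (k+1) + Nat.choose (2*p+k+1) k : ℕ) : R) else 0) * y^i)
      = ((Nat.choose (2*p+k+2) (k+1) + Nat.choose (2*p+k+1) k : ℕ) : R) * y^(k+1) := by
    simp only [ite_mul, zero_mul]
    rw [Finset.sum_ite_eq' (Finset.range (2*k+2+1)) (k+1)
      (fun i => ((Nat.choose (2*p+k+2) (k+1) + Nat.choose (2*p+k+1) k : ℕ) : R) * y^i)]
    rw [if_pos (Finset.mem_range.mpr (by omega))]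
  rw [← e2, ← Finset.sum_add_distrib,
    show (2*(k+1)+1) = 2*k+2+1 from rfl]
  refine Finset.sum_congr rfl fun i hi => ?_
  rw [← add_mul]
  have hp := point (R := R) p k i (Finset.mem_range.mp hi)
  rw [← hg] at hp
  rw [← hp]

lemma inv {R : Type*} [CommRing R] (x y : R) (h : x + y = 1) :
    ∀ k p r : ℕ, r = k + p →
      x^(2*r+1) + ∑ j ∈ Finset.Icc 1 k, ((dd r j : ℕ) : R) * x^(2*r+1-2*j) * y^j
        = x^(2*p+1) * ∑ i ∈ Finset.range (2*k+1), ((bb (2*p) k i : ℕ) : R) * y^i := by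
  intro k
  induction k with
  | zero =>
    intro p r hr
    subst hr
    simp [bb, Nat.choose_self]
  | succ k ih =>
    intro p r hr
    have IH := ih (p+1) r (by omega)
    rw [Finset.sum_Icc_succ_top (by omega : 1 ≤ k+1), ← add_assoc, IH]
    have he : 2*r+1-2*(k+1) = 2*p+1 := by omega
    rw [he]
    have hdd : dd r (k+1) = Nat.choose (2*p+k+2) (k+1) + Nat.choose (2*p+k+1) k := by
      unfold dd
      rw [show 2*r+1-(k+1) = 2*p+k+2 by omega, show 2*r-(k+1) = 2*p+k+1 by omega,
        show (k+1)-1 = k from rfl]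
    rw [hdd]
    have hkey := key x y h p k
    rw [show x^(2*(p+1)+1) * (∑ i ∈ Finset.range (2*k+1), ((bb (2*(p+1)) k i : ℕ) : R) * y^i)
        + ((Nat.choose (2*p+k+2) (k+1) + Nat.choose (2*p+k+1) k : ℕ) : R) * x^(2*p+1) * y^(k+1)
      = x^(2*p+1) * (x^2 * (∑ i ∈ Finset.range (2*k+1), ((bb (2*(p+1)) k i : ℕ) : R) * y^i)
        + ((Nat.choose (2*p+k+2) (k+1) + Nat.choose (2*p+k+1) k : ℕ) : R) * y^(k+1)) from by
      push_cast; ring]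
    rw [hkey]

theorem stmt_1 (r : ℕ) :
    (X : Polynomial ℝ) ^ (2 * r + 1) + (1 - X) ^ (2 * r + 1)
      + ∑ j ∈ Finset.Icc 1 r,
          Polynomial.C ((2 * r + 1 : ℝ) / (j : ℝ) * (Nat.choose (2 * r - j) (j - 1) : ℝ))
            * X ^ (2 * r + 1 - 2 * j) * (1 - X) ^ j
      = 1 := by
  have h : (X : Polynomial ℝ) + (1 - X) = 1 := by ring
  have I := inv (X : Polynomial ℝ) (1 - X) h r 0 r (by omega)
  have hconv : ∀ j ∈ Finset.Icc 1 r,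
      Polynomial.C ((2 * r + 1 : ℝ) / (j : ℝ) * (Nat.choose (2 * r - j) (j - 1) : ℝ))
          * X ^ (2 * r + 1 - 2 * j) * (1 - X) ^ j
        = ((dd r j : ℕ) : Polynomial ℝ) * X ^ (2 * r + 1 - 2 * j) * (1 - X) ^ j := by
    intro j hj
    obtain ⟨hj1, hj2⟩ := Finset.mem_Icc.mp hj
    have hnat : (2*r+1) * Nat.choose (2*r-j) (j-1) = dd r j * j := by
      have hj1' : (j-1)+1 = j := by omega
      have key2 : ((2*r-j)+1) * Nat.choose (2*r-j) (j-1)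
          = Nat.choose ((2*r-j)+1) j * j := by
        have h2 := Nat.add_one_mul_choose_eq (2*r-j) (j-1)
        rw [hj1'] at h2
        exact h2
      unfold dd
      rw [show 2*r+1-j = (2*r-j)+1 by omega, show 2*r+1 = ((2*r-j)+1) + j by omega,
        add_mul, key2]
      ring
    have hc : (2 * r + 1 : ℝ) / (j : ℝ) * (Nat.choose (2 * r - j) (j - 1) : ℝ)
        = ((dd r j : ℕ) : ℝ) := by
      have hj0 : (j : ℝ) ≠ 0 := by positivity
      field_simp
      exact_mod_cast hnat.trans (Nat.mul_comm _ _)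
    rw [hc, Polynomial.C_eq_natCast]
  rw [Finset.sum_congr rfl hconv]
  have hb : ∀ i ∈ Finset.range (2*r+1), ((bb (2*0) r i : ℕ) : Polynomial ℝ) * (1-X)^i
      = (1-X)^i := by
    intro i _
    have : bb (2*0) r i = 1 := by
      unfold bb
      rw [show 2*0 = 0 by omega, Nat.zero_add, Nat.choose_zero_right]
    rw [this]
    push_cast
    ring
  rw [Finset.sum_congr rfl hb] at I
  have G : (X : Polynomial ℝ) * ∑ i ∈ Finset.range (2*r+1), (1-X)^i
      = 1 - (1-X)^(2*r+1) := by
    have hgs := geom_sum_mul (1 - X : Polynomial ℝ) (2*r+1)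
    linear_combination -hgs
  have hX1 : (X : Polynomial ℝ)^(2*0+1) = X := by norm_num
  rw [hX1] at I
  calc (X : Polynomial ℝ) ^ (2 * r + 1) + (1 - X) ^ (2 * r + 1)
      + ∑ j ∈ Finset.Icc 1 r, ((dd r j : ℕ) : Polynomial ℝ) * X ^ (2 * r + 1 - 2 * j) * (1 - X) ^ j
      = (1 - X) ^ (2 * r + 1)
        + ((X : Polynomial ℝ) ^ (2 * r + 1)
          + ∑ j ∈ Finset.Icc 1 r, ((dd r j : ℕ) : Polynomial ℝ) * X ^ (2 * r + 1 - 2 * j) * (1 - X) ^ j) := by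
        ring
    _ = (1 - X) ^ (2 * r + 1) + X * ∑ i ∈ Finset.range (2*r+1), (1-X)^i := by rw [I]
    _ = 1 := by rw [G]; ring
end

section
/- For each integer r ≥ 0 and 1 ≤ j ≤ r, the number c(r,j) = ((2r+1)/j) · binomial(2r−j, j−1) is a positive integer. -/
theorem stmt_2 (r j : ℕ) (hj1 : 1 ≤ j) (hjr : j ≤ r) :
    ∃ n : ℕ, 0 < n ∧
      (n : ℚ) = (2 * r + 1 : ℚ) / (j : ℚ) * (Nat.choose (2 * r - j) (j - 1) : ℚ) := by
  have key : (2 * r + 1) * Nat.choose (2 * r - j) (j - 1)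
      = j * (Nat.choose (2 * r - j + 1) j + Nat.choose (2 * r - j) (j - 1)) := by
    have h := Nat.add_one_mul_choose_eq (2 * r - j) (j - 1)
    have hjj : j - 1 + 1 = j := by omega
    simp only [Nat.succ_eq_add_one, hjj] at h
    have h2 : 2 * r - j + 1 + j = 2 * r + 1 := by omega
    nlinarith [h]
  refine ⟨Nat.choose (2 * r - j + 1) j + Nat.choose (2 * r - j) (j - 1), ?_, ?_⟩
  · have : 0 < Nat.choose (2 * r - j) (j - 1) := Nat.choose_pos (by omega)
    omega
  · have hjq : (j : ℚ) ≠ 0 := Nat.cast_ne_zero.mpr (by omega)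
    rw [div_mul_eq_mul_div, eq_div_iff hjq]
    push_cast
    have := congrArg (Nat.cast (R := ℚ)) key
    push_cast at this
    linarith
end

section
/- Let p(t) = 1 + Σ_{j=1}^{K} c_j t^j with each c_j ≥ 0, and suppose at least k of the c_j are strictly positive. Let F(t) = (1+t)^m. Then the product F·p has at least m + 1 + k non-zero coefficients. -/
open Polynomial

theorem stmt_9 (m K k : ℕ) (p : Polynomial ℝ)
    (h0 : p.coeff 0 = 1) (hdeg : p.natDegree ≤ K)
    (hnn : ∀ j, 0 ≤ p.coeff j)
    (hk : k ≤ ((Finset.Icc 1 K).filter fun j => 0 < p.coeff j).card) :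
    m + 1 + k ≤ ((1 + X : Polynomial ℝ) ^ m * p).support.card := by
  set S := (Finset.Icc 1 K).filter fun j => 0 < p.coeff j with hS
  set q := (1 + X : Polynomial ℝ) ^ m * p with hq
  have hpos : ∀ d, (d ≤ m ∨ ∃ j ∈ S, d = m + j) → 0 < q.coeff d := by
    intro d hd
    rw [hq, coeff_mul]
    apply Finset.sum_pos'
    · intro x hx
      rw [coeff_one_add_X_pow]
      exact mul_nonneg (by positivity) (hnn x.2)
    · rcases hd with hd | ⟨j, hjS, rfl⟩
      · refine ⟨(d, 0), ?_, ?_⟩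
        · simp [Finset.mem_antidiagonal]
        · rw [coeff_one_add_X_pow, h0, mul_one]
          exact_mod_cast Nat.choose_pos hd
      · refine ⟨(m, j), ?_, ?_⟩
        · simp [Finset.mem_antidiagonal]
        · rw [coeff_one_add_X_pow, Nat.choose_self]
          have := (Finset.mem_filter.mp hjS).2
          simpa using this
  set T := Finset.range (m + 1) ∪ S.image (fun j => m + j) with hT
  have hsub : T ⊆ q.support := by
    intro d hd
    rw [mem_support_iff]
    refine ne_of_gt (hpos d ?_)
    rcases Finset.mem_union.mp hd with h | h
    · exact Or.inl (Nat.lt_succ_iff.mp (Finset.mem_range.mp h))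
    · obtain ⟨j, hj, rfl⟩ := Finset.mem_image.mp h
      exact Or.inr ⟨j, hj, rfl⟩
  have hdisj : Disjoint (Finset.range (m + 1)) (S.image (fun j => m + j)) := by
    rw [Finset.disjoint_right]
    intro d hd hd'
    obtain ⟨j, hj, rfl⟩ := Finset.mem_image.mp hd
    have hj1 : 1 ≤ j := (Finset.mem_Icc.mp (Finset.mem_filter.mp hj).1).1
    have := Finset.mem_range.mp hd'
    omega
  have hcard : T.card = m + 1 + S.card := by
    rw [hT, Finset.card_union_of_disjoint hdisj, Finset.card_range,
      Finset.card_image_of_injective _ (fun a b h => by omega)]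
  calc m + 1 + k ≤ T.card := by omega
    _ ≤ q.support.card := Finset.card_le_card hsub
end

section
/- Let f be a good polynomial (f(x,1−x)=1, non-negative coefficients, f(0,0)=0, f non-zero) and a ≥ 1 an integer. Then there exist good polynomials g and h with N(g) = a·N(f) and N(h) = a·N(f) − (a−1). -/
open MvPolynomial

/-- A polynomial in two real variables is *good* if it equals `1` on the line `x + y = 1`,
has only non-negative coefficients, and has zero constant term. -/
def Good (f : MvPolynomial (Fin 2) ℝ) : Prop :=
  MvPolynomial.aeval ![(Polynomial.X : Polynomial ℝ), 1 - Polynomial.X] f = 1 ∧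
  (∀ α, 0 ≤ f.coeff α) ∧
  MvPolynomial.constantCoeff f = 0

lemma deg_pos (s : Fin 2 →₀ ℕ) (hs : s ≠ 0) : 1 ≤ s.sum fun _ e => e := by
  obtain ⟨i, hi⟩ : ∃ i, s i ≠ 0 := by
    by_contra h
    push_neg at h
    exact hs (Finsupp.ext h)
  calc 1 ≤ s i := Nat.one_le_iff_ne_zero.2 hi
    _ ≤ s.sum fun _ e => e := by
        rw [Finsupp.sum]
        exact Finset.single_le_sum (fun j _ => Nat.zero_le _) (Finsupp.mem_support_iff.2 hi)

lemma step (f F : MvPolynomial (Fin 2) ℝ) (hf : Good f) (hF : Good F) (hF0 : F ≠ 0)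
    (lam : ℝ) (hl0 : 0 < lam) (hl1 : lam ≤ 1) :
    ∃ F' : MvPolynomial (Fin 2) ℝ, Good F' ∧ F' ≠ 0 ∧
      F'.support.card =
        (if lam = 1 then F.support.card - 1 else F.support.card) + f.support.card := by
  classical
  obtain ⟨α, hαmem, hαdeg⟩ := Finset.exists_mem_eq_sup F.support
    (support_nonempty.2 hF0) (fun s => s.sum fun _ e => e)
  set c : ℝ := F.coeff α with hc
  have hc0 : 0 < c := lt_of_le_of_ne (hF.2.1 α) (Ne.symm (mem_support_iff.1 hαmem))
  have hα0 : α ≠ 0 := by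
    intro h
    exact mem_support_iff.1 hαmem (h ▸ hF.2.2)
  set P : MvPolynomial (Fin 2) ℝ := monomial α 1 * f with hP
  set F' : MvPolynomial (Fin 2) ℝ := F + (lam * c) • (P - monomial α 1) with hF'
  set T : Finset (Fin 2 →₀ ℕ) := f.support.image (fun s => α + s) with hT
  -- degree facts
  have hTdeg : ∀ β ∈ T, β ∉ F.support ∧ β ≠ α := by
    intro β hβ
    simp only [hT, Finset.mem_image] at hβ
    obtain ⟨s, hs, rfl⟩ := hβ
    have hs0 : s ≠ 0 := by
      intro h
      exact mem_support_iff.1 hs (h ▸ hf.2.2)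
    have hdeg : F.totalDegree < (α + s).sum fun _ e => e := by
      rw [Finsupp.sum_add_index (by simp) (by simp)]
      have := deg_pos s hs0
      rw [totalDegree, hαdeg]
      omega
    constructor
    · intro h
      exact absurd (le_totalDegree h) (not_le.2 hdeg)
    · intro h
      rw [h, totalDegree, hαdeg] at hdeg
      omega
  have hPcoeff : ∀ β, P.coeff β = if α ≤ β then f.coeff (β - α) else 0 := by
    intro β
    rw [hP, coeff_monomial_mul']
    simp
  have hPT : ∀ β, β ∉ T → P.coeff β = 0 := by
    intro β hβ
    rw [hPcoeff]
    split_ifs with h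
    · by_contra hne
      exact hβ (Finset.mem_image.2 ⟨β - α, mem_support_iff.2 hne,
        by rw [add_tsub_cancel_of_le h]⟩)
    · rfl
  have hPs : ∀ s, P.coeff (α + s) = f.coeff s := by
    intro s
    rw [hPcoeff, if_pos le_self_add, add_tsub_cancel_left]
  have hcoeff : ∀ β, F'.coeff β =
      F.coeff β + lam * c * (P.coeff β - if α = β then 1 else 0) := by
    intro β
    simp [hF', coeff_add, coeff_smul, coeff_sub, coeff_monomial, smul_eq_mul]
  -- coefficient of F' at α
  have hcoeffα : F'.coeff α = (1 - lam) * c := by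
    have : P.coeff α = 0 := by
      have := hPs 0
      simpa using this.trans hf.2.2
    rw [hcoeff, this, if_pos rfl]
    ring
  -- membership characterization
  have hsupp : F'.support = (if lam = 1 then F.support.erase α else F.support) ∪ T := by
    ext β
    by_cases hβT : β ∈ T
    · obtain ⟨hβF, hβα⟩ := hTdeg β hβT
      simp only [hT, Finset.mem_image] at hβT
      obtain ⟨s, hs, rfl⟩ := hβT
      have hfs : 0 < f.coeff s := lt_of_le_of_ne (hf.2.1 s) (Ne.symm (mem_support_iff.1 hs))
      have : F'.coeff (α + s) = lam * c * f.coeff s := by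
        rw [hcoeff, hPs, if_neg (fun h => hβα h.symm)]
        rw [mem_support_iff, not_not] at hβF
        rw [hβF]; ring
      have hne : F'.coeff (α + s) ≠ 0 := by
        rw [this]; positivity
      simp only [Finset.mem_union, mem_support_iff]
      exact ⟨fun _ => Or.inr (Finset.mem_image.2 ⟨s, hs, rfl⟩), fun _ => hne⟩
    · by_cases hβα : β = α
      · subst hβα
        have hβT' : β ∉ T := hβT
        simp only [Finset.mem_union, mem_support_iff, hcoeffα]
        constructor
        · intro h
          have hlam : lam ≠ 1 := by
            intro h1; rw [h1] at h; simp at h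
          rw [if_neg hlam]
          left; exact hαmem
        · intro h
          have h' := h.resolve_right hβT'
          have hlam : lam ≠ 1 := by
            intro h1
            rw [if_pos h1] at h'
            exact Finset.notMem_erase β _ h'
          intro he
          rcases mul_eq_zero.1 he with h2 | h2
          · exact hlam (sub_eq_zero.1 h2).symm
          · exact hc0.ne' h2
      · have : F'.coeff β = F.coeff β := by
          rw [hcoeff, hPT β hβT, if_neg (fun h => hβα h.symm)]
          ring
        simp only [Finset.mem_union, mem_support_iff, this]
        constructor
        · intro h
          left
          split_ifs with h1
          · exact Finset.mem_erase.2 ⟨hβα, mem_support_iff.2 h⟩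
          · exact mem_support_iff.2 h
        · intro h
          rcases h with h | h
          · split_ifs at h with h1
            · exact mem_support_iff.1 (Finset.mem_erase.1 h).2
            · exact mem_support_iff.1 h
          · exact absurd h hβT
  -- Goodness of F'
  have hgood : Good F' := by
    refine ⟨?_, ?_, ?_⟩
    · have h1 := hF.1
      have h2 := hf.1
      simp only [hF', hP, map_add, map_smul, map_sub, map_mul, h1, h2]
      simp
    · intro β
      by_cases hβT : β ∈ T
      · simp only [hT, Finset.mem_image] at hβT
        obtain ⟨s, hs, rfl⟩ := hβT
        have hβα : α + s ≠ α := (hTdeg _ (Finset.mem_image.2 ⟨s, hs, rfl⟩)).2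
        rw [hcoeff, hPs, if_neg (fun h => hβα h.symm)]
        have h1 : 0 ≤ lam * c * f.coeff s := mul_nonneg (mul_nonneg hl0.le hc0.le) (hf.2.1 s)
        have h2 := hF.2.1 (α + s)
        simp only [sub_zero]
        linarith
      · by_cases hβα : β = α
        · subst hβα
          rw [hcoeffα]
          nlinarith
        · rw [hcoeff, hPT β hβT, if_neg (fun h => hβα h.symm)]
          have := hF.2.1 β
          linarith
    · show F'.coeff 0 = 0
      have h0T : (0 : Fin 2 →₀ ℕ) ∉ T := by
        intro h
        obtain ⟨hF0', _⟩ := hTdeg 0 h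
        simp only [hT, Finset.mem_image] at h
        obtain ⟨s, hs, hadd⟩ := h
        have : α = 0 := by
          ext i
          have h2 := DFunLike.congr_fun hadd i
          simp only [Finsupp.add_apply, Finsupp.coe_zero, Pi.zero_apply] at h2 ⊢
          omega
        exact hα0 this
      rw [hcoeff, hPT 0 h0T, if_neg hα0]
      have : F.coeff 0 = 0 := hF.2.2
      rw [this]; ring
  refine ⟨F', hgood, ?_, ?_⟩
  · intro h
    have := hgood.1
    rw [h] at this
    simp at this
  · rw [hsupp, Finset.card_union_of_disjoint, Finset.card_image_of_injective _ (add_right_injective α)]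
    · split_ifs with h1
      · rw [Finset.card_erase_of_mem hαmem]
      · rfl
    · rw [Finset.disjoint_right]
      intro β hβ
      have := (hTdeg β hβ).1
      split_ifs with h1
      · intro h; exact this (Finset.mem_of_mem_erase h)
      · exact this

lemma iter_g (f : MvPolynomial (Fin 2) ℝ) (hf : Good f) (hf0 : f ≠ 0) (a : ℕ) :
    ∃ g : MvPolynomial (Fin 2) ℝ, Good g ∧ g ≠ 0 ∧
      g.support.card = (a + 1) * f.support.card := by
  induction a with
  | zero => exact ⟨f, hf, hf0, (one_mul _).symm⟩
  | succ n ih =>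
    obtain ⟨g, hg, hg0, hcard⟩ := ih
    obtain ⟨g', hg', hg'0, hcard'⟩ := step f g hf hg hg0 (1/2) (by norm_num) (by norm_num)
    refine ⟨g', hg', hg'0, ?_⟩
    rw [hcard', if_neg (by norm_num), hcard]
    ring

lemma iter_h (f : MvPolynomial (Fin 2) ℝ) (hf : Good f) (hf0 : f ≠ 0) (a : ℕ) :
    ∃ h : MvPolynomial (Fin 2) ℝ, Good h ∧ h ≠ 0 ∧
      h.support.card = (a + 1) * f.support.card - a := by
  induction a with
  | zero => exact ⟨f, hf, hf0, by simp⟩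
  | succ n ih =>
    obtain ⟨g, hg, hg0, hcard⟩ := ih
    obtain ⟨g', hg', hg'0, hcard'⟩ := step f g hf hg hg0 1 (by norm_num) (by norm_num)
    refine ⟨g', hg', hg'0, ?_⟩
    rw [hcard', if_pos rfl, hcard]
    have hN : 1 ≤ f.support.card := Finset.card_pos.2 (MvPolynomial.support_nonempty.2 hf0)
    have hM : n + 1 ≤ (n + 1) * f.support.card := Nat.le_mul_of_pos_right _ hN
    have hsplit : (n + 1 + 1) * f.support.card = (n + 1) * f.support.card + f.support.card := by
      ring
    set M := (n + 1) * f.support.card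
    omega

theorem stmt_13 (f : MvPolynomial (Fin 2) ℝ) (hf : Good f) (hf0 : f ≠ 0)
    (a : ℕ) (ha : 1 ≤ a) :
    ∃ g h : MvPolynomial (Fin 2) ℝ, Good g ∧ Good h ∧
      g.support.card = a * f.support.card ∧
      h.support.card = a * f.support.card - (a - 1) := by
  obtain ⟨b, rfl⟩ : ∃ b, a = b + 1 := ⟨a - 1, by omega⟩
  obtain ⟨g, hg, _, hgc⟩ := iter_g f hf hf0 b
  obtain ⟨h, hh, _, hhc⟩ := iter_h f hf hf0 b
  exact ⟨g, h, hg, hh, hgc, by simpa using hhc⟩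
end

section
/- The polynomial F(x,y,z) = x⁷ + y⁷ + z⁷ + 14(x³y² + x²z³ + y³z² + xyz) + 7(x⁵y + xz⁵ + y⁵z + xy³ + x³z + yz³) + 7(xy²z⁴ + x²y⁴z + x⁴yz² + x²y²z²) satisfies F(x, y, 1−x−y) = 1 identically, F(0,0,0) = 0, and F(ηx, η²y, η⁴z) = F(x,y,z) where η is a primitive 7th root of unity. -/
open MvPolynomial

theorem stmt_17 (η : ℂ) (hη : IsPrimitiveRoot η 7) :
    let x : MvPolynomial (Fin 3) ℝ := MvPolynomial.X 0
    let y : MvPolynomial (Fin 3) ℝ := MvPolynomial.X 1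
    let z : MvPolynomial (Fin 3) ℝ := MvPolynomial.X 2
    let F : MvPolynomial (Fin 3) ℝ :=
      x ^ 7 + y ^ 7 + z ^ 7
        + 14 * (x ^ 3 * y ^ 2 + x ^ 2 * z ^ 3 + y ^ 3 * z ^ 2 + x * y * z)
        + 7 * (x ^ 5 * y + x * z ^ 5 + y ^ 5 * z + x * y ^ 3 + x ^ 3 * z + y * z ^ 3)
        + 7 * (x * y ^ 2 * z ^ 4 + x ^ 2 * y ^ 4 * z + x ^ 4 * y * z ^ 2
            + x ^ 2 * y ^ 2 * z ^ 2)
    MvPolynomial.aeval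
        ![(MvPolynomial.X 0 : MvPolynomial (Fin 2) ℝ), MvPolynomial.X 1,
          1 - MvPolynomial.X 0 - MvPolynomial.X 1] F = 1 ∧
    MvPolynomial.constantCoeff F = 0 ∧
    MvPolynomial.bind₁
        ![MvPolynomial.C η * MvPolynomial.X 0, MvPolynomial.C (η ^ 2) * MvPolynomial.X 1,
          MvPolynomial.C (η ^ 4) * MvPolynomial.X 2]
        (F.map (algebraMap ℝ ℂ)) = F.map (algebraMap ℝ ℂ) := by
  intro x y z F
  have h7 : (η : ℂ) ^ 7 = 1 := hη.pow_eq_one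
  refine ⟨?_, ?_, ?_⟩
  · show MvPolynomial.aeval _ F = 1
    simp only [F, x, y, z, map_add, map_mul, map_pow, map_ofNat, aeval_X,
      Matrix.cons_val_zero, Matrix.cons_val_one, Matrix.head_cons, Matrix.cons_val_two,
      Matrix.tail_cons]
    ring
  · simp [F, x, y, z]
  · show MvPolynomial.bind₁ _ (F.map (algebraMap ℝ ℂ)) = _
    simp only [F, x, y, z, map_ofNat, MvPolynomial.map_X, map_add, map_mul, map_pow,
      bind₁_X_right, Matrix.cons_val_zero, Matrix.cons_val_one, Matrix.head_cons,
      Matrix.cons_val_two, Matrix.tail_cons]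
    ring_nf
    simp only [← map_pow, ← map_mul]
    norm_num
    have hc : (MvPolynomial.C η : MvPolynomial (Fin 3) ℂ) ^ 7 = 1 := by
      rw [← map_pow, h7, map_one]
    rw [show (14:ℕ) = 7*2 by norm_num, show (21:ℕ) = 7*3 by norm_num,
      show (28:ℕ) = 7*4 by norm_num, pow_mul, pow_mul, pow_mul, hc, one_pow, one_pow, one_pow]
    ring
end
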